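/- arXiv:0807.2627 — 2 statements merged into one kernel-verified Lean document; each statement's English description precedes it below -/
import Mathlib

section
/- Let ν be a nonnegative Radon measure on ℝ^N \ {0} satisfying: ν(ℝ^N \ B_δ) < ∞ for all δ > 0, and ν{ z ∈ B : r|z·e| ≤ |z-(z·e)e|² } < ∞ for all r > 0 and all unit vectors e. Let u : ℝ^N → ℝ be globally Lipschitz and C^{1,1} at a point x, i.e. there is C > 0 with |u(x+z) - u(x) - Du(x)·z| ≤ C|z|² for all z, and suppose Du(x) ≠ 0. Then the quantity κ₊*[x,u] = ν{ z : u(x+z) ≥ u(x), Du(x)·z ≤ 0 } is finite. -/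
open MeasureTheory Metric Filter Set
open scoped ENNReal Topology RealInnerProductSpace

/-!
Write `p = ‖p‖ e` with `‖e‖ = 1`. On `{u(x+·) ≥ u(x)} ∩ {p·z ≤ 0}` the `C^{1,1}` bound gives
`‖p‖ |z·e| ≤ C‖z‖² = C((z·e)² + |z - (z·e)e|²)`. Once `‖z‖ ≤ r := ‖p‖/(2C)`, the term
`C(z·e)² ≤ C r |z·e|` absorbs half of the left side, leaving `r |z·e| ≤ |z - (z·e)e|²`.
So near the origin the set lies in a parabolic region of finite `ν`-measure, and away from the
origin `ν` is finite anyway.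
-/

section InnerProductSpace

variable {E : Type*} [NormedAddCommGroup E] [InnerProductSpace ℝ E]

def parabolicRegion (e : E) (r : ℝ) : Set E :=
  {z ∈ ball (0 : E) 1 | r * |⟪z, e⟫| ≤ ‖z - ⟪z, e⟫ • e‖ ^ 2}

theorem norm_sq_eq_inner_sq_add_norm_sub_sq {e : E} (he : ‖e‖ = 1) (z : E) :
    ‖z‖ ^ 2 = ⟪z, e⟫ ^ 2 + ‖z - ⟪z, e⟫ • e‖ ^ 2 := by
  rw [norm_sub_sq_real, real_inner_smul_right, norm_smul, Real.norm_eq_abs, he]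
  ring_nf
  rw [sq_abs]
  ring

theorem mul_abs_inner_le_norm_sub_sq {e z : E} {a C : ℝ} (he : ‖e‖ = 1) (hC : 0 < C)
    (hz : ‖z‖ ≤ a / (2 * C)) (h : a * |⟪z, e⟫| ≤ C * ‖z‖ ^ 2) :
    a / (2 * C) * |⟪z, e⟫| ≤ ‖z - ⟪z, e⟫ • e‖ ^ 2 := by
  rw [norm_sq_eq_inner_sq_add_norm_sub_sq he z] at h
  set t := ⟪z, e⟫
  set r := a / (2 * C)
  have ht : |t| ≤ ‖z‖ := by simpa [he] using abs_real_inner_le_norm z e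
  have ht_sq : t ^ 2 ≤ r * |t| := by
    rw [← sq_abs, sq]
    exact mul_le_mul_of_nonneg_right (ht.trans hz) (abs_nonneg t)
  have hr : r * (2 * C) = a := div_mul_cancel₀ _ (by positivity)
  rw [← hr] at h
  nlinarith [mul_le_mul_of_nonneg_left ht_sq hC.le]

theorem mem_parabolicRegion_of_abs_inner_le {p z : E} {C : ℝ} (hp : p ≠ 0) (hC : 0 < C)
    (hz : ‖z‖ < min 1 (‖p‖ / (2 * C))) (h : |⟪p, z⟫| ≤ C * ‖z‖ ^ 2) :
    z ∈ parabolicRegion (‖p‖⁻¹ • p) (‖p‖ / (2 * C)) := by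
  have hp' : ‖p‖ ≠ 0 := norm_ne_zero_iff.mpr hp
  have hpz : ⟪p, z⟫ = ‖p‖ * ⟪z, ‖p‖⁻¹ • p⟫ := by
    rw [real_inner_smul_right, real_inner_comm, ← mul_assoc, mul_inv_cancel₀ hp', one_mul]
  refine ⟨mem_ball_zero_iff.mpr (hz.trans_le (min_le_left _ _)), ?_⟩
  refine mul_abs_inner_le_norm_sub_sq (norm_smul_inv_norm hp) hC
    (hz.le.trans (min_le_right _ _)) ?_
  rwa [hpz, abs_mul, abs_norm] at h

theorem superlevel_inter_halfSpace_subset {u : E → ℝ} {x p : E} {C : ℝ} (hp : p ≠ 0)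
    (hC : 0 < C) (hC11 : ∀ z, |u (x + z) - u x - ⟪p, z⟫| ≤ C * ‖z‖ ^ 2) :
    {z | u x ≤ u (x + z) ∧ ⟪p, z⟫ ≤ 0} ⊆
      (ball 0 (min 1 (‖p‖ / (2 * C))))ᶜ ∪ parabolicRegion (‖p‖⁻¹ • p) (‖p‖ / (2 * C)) := by
  rintro z ⟨hsuper, hhalf⟩
  by_cases hz : z ∈ ball (0 : E) (min 1 (‖p‖ / (2 * C)))
  · right
    refine mem_parabolicRegion_of_abs_inner_le hp hC (mem_ball_zero_iff.mp hz) ?_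
    rw [abs_of_nonpos hhalf]
    linarith [(abs_le.mp (hC11 z)).2]
  · exact Or.inl hz

end InnerProductSpace

theorem kappa_plus_finite_general (N : ℕ)
    (ν : Measure (EuclideanSpace ℝ (Fin N)))
    (hν1 : ∀ δ : ℝ, 0 < δ → ν (Metric.ball (0 : EuclideanSpace ℝ (Fin N)) δ)ᶜ < ⊤)
    (hν2 : ∀ r : ℝ, 0 < r → ∀ e : EuclideanSpace ℝ (Fin N), ‖e‖ = 1 →
      ν {z ∈ Metric.ball (0 : EuclideanSpace ℝ (Fin N)) 1 |
          r * |⟪z, e⟫| ≤ ‖z - ⟪z, e⟫ • e‖ ^ 2} < ⊤)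
    (u : EuclideanSpace ℝ (Fin N) → ℝ)
    (x p : EuclideanSpace ℝ (Fin N)) (hp : p ≠ 0)
    (C : ℝ) (hC : 0 < C)
    (hC11 : ∀ z, |u (x + z) - u x - ⟪p, z⟫| ≤ C * ‖z‖ ^ 2) :
    ν {z | u x ≤ u (x + z) ∧ ⟪p, z⟫ ≤ 0} < ⊤ := by
  have hr : 0 < ‖p‖ / (2 * C) := div_pos (norm_pos_iff.mpr hp) (by positivity)
  refine (measure_mono (superlevel_inter_halfSpace_subset hp hC hC11)).trans_lt ?_
  exact measure_union_lt_top (hν1 _ (lt_min one_pos hr))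
    (hν2 _ hr _ (norm_smul_inv_norm hp))

/-- If the nonnegative Radon measure `ν` is finite away from the origin and finite on
parabolic regions, `u` is globally Lipschitz and `C^{1,1}` at `x` with nonzero gradient
`p = Du(x)`, then `κ₊*[x,u] = ν{ z : u(x+z) ≥ u(x), Du(x)·z ≤ 0 }` is finite. -/
theorem kappa_plus_finite (N : ℕ) (hN : 1 ≤ N)
    (ν : Measure (EuclideanSpace ℝ (Fin N)))
    (hν1 : ∀ δ : ℝ, 0 < δ → ν (Metric.ball (0 : EuclideanSpace ℝ (Fin N)) δ)ᶜ < ⊤)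
    (hν2 : ∀ r : ℝ, 0 < r → ∀ e : EuclideanSpace ℝ (Fin N), ‖e‖ = 1 →
      ν {z ∈ Metric.ball (0 : EuclideanSpace ℝ (Fin N)) 1 |
          r * |⟪z, e⟫| ≤ ‖z - ⟪z, e⟫ • e‖ ^ 2} < ⊤)
    (u : EuclideanSpace ℝ (Fin N) → ℝ) (L : NNReal) (hLip : LipschitzWith L u)
    (x p : EuclideanSpace ℝ (Fin N)) (hgrad : HasGradientAt u p x) (hp : p ≠ 0)
    (C : ℝ) (hC : 0 < C)
    (hC11 : ∀ z, |u (x + z) - u x - ⟪p, z⟫| ≤ C * ‖z‖ ^ 2) :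
    ν {z | u x ≤ u (x + z) ∧ ⟪p, z⟫ ≤ 0} < ⊤ :=
  kappa_plus_finite_general N ν hν1 hν2 u x p hp C hC hC11
end

section
/- Let ν be a nonnegative Radon measure on ℝ^N \ {0} satisfying ν(ℝ^N \ B_δ) ≤ C_ν/δ for δ ∈ (0,1] and sup_{e∈S, r∈(0,1]} r·ν{ z ∈ B : r|z·e| ≤ |z-(z·e)e|² } ≤ C_ν. Let u₀ ∈ C²_b(ℝ^N) (bounded with bounded first and second derivatives). Then there is a constant C₀ depending only on C_ν, ‖Du₀‖_∞ and ‖D²u₀‖_∞ such that for every x with Du₀(x) ≠ 0: ( ν{z : u₀(x+z) ≥ u₀(x), Du₀(x)·z ≤ 0} + ν{z : u₀(x+z) ≤ u₀(x), Du₀(x)·z ≥ 0} ) · |Du₀(x)| ≤ C₀. -/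
open MeasureTheory Metric Set
open scoped RealInnerProductSpace

/-!
Write `g = |Du₀(x)|`, `e = Du₀(x)/g`. On both sets the Taylor bound gives
`g |z·e| ≤ M |z|²`, with `M` the bound on `D²u₀`. Inside a ball of radius `r = g/(g + 2M)` such a
point satisfies `r |z·e| ≤ |z - (z·e)e|²`, so each set is covered by the region of the second
assumption on `ν` together with the complement of `B_r`. Each set therefore has measure at most
`2 C_ν / r`, and `g / r = g + 2M`.
-/

section

variable {E : Type*} [NormedAddCommGroup E] [InnerProductSpace ℝ E]

def betweenParaboloids (e : E) (r : ℝ) : Set E :=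
  {z ∈ ball (0 : E) 1 | r * |⟪z, e⟫| ≤ ‖z - ⟪z, e⟫ • e‖ ^ 2}

theorem norm_sub_inner_smul_sq {e : E} (he : ‖e‖ = 1) (z : E) :
    ‖z - ⟪z, e⟫ • e‖ ^ 2 = ‖z‖ ^ 2 - ⟪z, e⟫ ^ 2 := by
  rw [norm_sub_sq_real, real_inner_smul_right, norm_smul, he, mul_one, Real.norm_eq_abs, sq_abs]
  ring

theorem mem_betweenParaboloids_of_mul_abs_inner_le {e z : E} {g M r : ℝ} (he : ‖e‖ = 1)
    (hg : 0 < g) (hM : 0 ≤ M) (hr : 2 * M * r ≤ g) (hr1 : r ≤ 1) (hz : ‖z‖ < r)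
    (h : g * |⟪z, e⟫| ≤ M * ‖z‖ ^ 2) : z ∈ betweenParaboloids e r := by
  refine ⟨mem_ball_zero_iff.mpr (hz.trans_le hr1), ?_⟩
  rw [norm_sub_inner_smul_sq he]
  set c := ⟪z, e⟫
  have hc : |c| ≤ ‖z‖ := by simpa [he] using abs_real_inner_le_norm z e
  have hc2 : c ^ 2 ≤ r * |c| := by
    rw [← sq_abs]; nlinarith [abs_nonneg c]
  -- `g |c| ≤ M (|z|² - c²) + M r |c|` and `2 M r ≤ g` give `g |c| ≤ 2 M (|z|² - c²)`.
  have hgc : g * |c| ≤ 2 * M * (‖z‖ ^ 2 - c ^ 2) := by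
    nlinarith [mul_le_mul_of_nonneg_left hc2 hM, mul_le_mul_of_nonneg_right hr (abs_nonneg c)]
  have hW : 0 ≤ ‖z‖ ^ 2 - c ^ 2 := by nlinarith [sq_abs c, abs_nonneg c]
  refine le_of_mul_le_mul_left ?_ hg
  nlinarith [mul_le_mul_of_nonneg_left hgc (hz.le.trans' (norm_nonneg z)),
    mul_le_mul_of_nonneg_right hr hW]

theorem abs_le_of_abs_sub_le_of_opposite_signs {a b K : ℝ} (h : |a - b| ≤ K)
    (hab : (0 ≤ a ∧ b ≤ 0) ∨ (a ≤ 0 ∧ 0 ≤ b)) : |b| ≤ K := by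
  rcases hab with ⟨ha, hb⟩ | ⟨ha, hb⟩
  · rw [abs_of_nonpos hb]; linarith [le_abs_self (a - b)]
  · rw [abs_of_nonneg hb]; linarith [neg_abs_le (a - b)]

theorem abs_inner_eq_norm_mul_abs_inner_normalize (p z : E) :
    |⟪p, z⟫| = ‖p‖ * |⟪z, ‖p‖⁻¹ • p⟫| := by
  rcases eq_or_ne p 0 with rfl | hp
  · simp
  rw [real_inner_smul_right, abs_mul, abs_inv, abs_norm, real_inner_comm,
    mul_inv_cancel_left₀ (norm_ne_zero_iff.mpr hp)]

variable [MeasurableSpace E] {ν : Measure E} {Cν : ℝ}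

theorem measure_le_of_forall_mul_abs_inner_le {A : Set E} {e : E} {g M r : ℝ} (he : ‖e‖ = 1)
    (hg : 0 < g) (hM : 0 ≤ M) (hr0 : 0 < r) (hr1 : r ≤ 1) (hr : 2 * M * r ≤ g)
    (hfar : ν (ball (0 : E) r)ᶜ ≤ ENNReal.ofReal (Cν / r))
    (hnear : ENNReal.ofReal r * ν (betweenParaboloids e r) ≤ ENNReal.ofReal Cν)
    (hA : ∀ z ∈ A, g * |⟪z, e⟫| ≤ M * ‖z‖ ^ 2) :
    ν A ≤ 2 * ENNReal.ofReal (Cν / r) := by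
  have hcover : A ⊆ betweenParaboloids e r ∪ (ball (0 : E) r)ᶜ := fun z hz => by
    by_cases hzr : ‖z‖ < r
    · exact .inl (mem_betweenParaboloids_of_mul_abs_inner_le he hg hM hr hr1 hzr (hA z hz))
    · exact .inr (by simpa using hzr)
  have hnear' : ν (betweenParaboloids e r) ≤ ENNReal.ofReal (Cν / r) := by
    rw [ENNReal.ofReal_div_of_pos hr0, ENNReal.le_div_iff_mul_le (.inl (by simpa using hr0))
      (.inl ENNReal.ofReal_ne_top), mul_comm]
    exact hnear
  calc ν A ≤ ν (betweenParaboloids e r) + ν (ball (0 : E) r)ᶜ :=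
        (measure_mono hcover).trans (measure_union_le _ _)
    _ ≤ ENNReal.ofReal (Cν / r) + ENNReal.ofReal (Cν / r) := add_le_add hnear' hfar
    _ = 2 * ENNReal.ofReal (Cν / r) := (two_mul _).symm

theorem measure_add_measure_opposite_sides_mul_norm_le
    (hν1 : ∀ δ ∈ Set.Ioc (0:ℝ) 1, ν (ball (0 : E) δ)ᶜ ≤ ENNReal.ofReal (Cν / δ))
    (hν2 : ∀ e : E, ‖e‖ = 1 → ∀ r ∈ Set.Ioc (0:ℝ) 1,
      ENNReal.ofReal r * ν (betweenParaboloids e r) ≤ ENNReal.ofReal Cν)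
    {u : E → ℝ} {x p : E} {M : ℝ} (hp : p ≠ 0) (hM : 0 ≤ M)
    (hu : ∀ z, |u (x + z) - u x - ⟪p, z⟫| ≤ M * ‖z‖ ^ 2) :
    (ν {z | u x ≤ u (x + z) ∧ ⟪p, z⟫ ≤ 0} + ν {z | u (x + z) ≤ u x ∧ 0 ≤ ⟪p, z⟫})
      * ENNReal.ofReal ‖p‖ ≤ ENNReal.ofReal (4 * Cν * (‖p‖ + 2 * M)) := by
  set g := ‖p‖
  set e := g⁻¹ • p
  have hg : 0 < g := norm_pos_iff.mpr hp
  have he : ‖e‖ = 1 := norm_smul_inv_norm hp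
  set r := g / (g + 2 * M)
  have hr0 : 0 < r := by positivity
  have hr1 : r ≤ 1 := div_le_one_of_le₀ (by linarith) (by positivity)
  have hr : 2 * M * r ≤ g := by
    rw [mul_div_assoc', div_le_iff₀ (by positivity)]; nlinarith
  have hside : ∀ A : Set E, (∀ z ∈ A, (0 ≤ u (x + z) - u x ∧ ⟪p, z⟫ ≤ 0) ∨
      (u (x + z) - u x ≤ 0 ∧ 0 ≤ ⟪p, z⟫)) → ν A ≤ 2 * ENNReal.ofReal (Cν / r) :=
    fun A hA => measure_le_of_forall_mul_abs_inner_le he hg hM hr0 hr1 hr (hν1 r ⟨hr0, hr1⟩)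
      (hν2 e he r ⟨hr0, hr1⟩) fun z hz => by
        rw [← abs_inner_eq_norm_mul_abs_inner_normalize]
        exact abs_le_of_abs_sub_le_of_opposite_signs (hu z) (hA z hz)
  have hplus := hside {z | u x ≤ u (x + z) ∧ ⟪p, z⟫ ≤ 0}
    fun z hz => .inl ⟨sub_nonneg.mpr hz.1, hz.2⟩
  have hminus := hside {z | u (x + z) ≤ u x ∧ 0 ≤ ⟪p, z⟫}
    fun z hz => .inr ⟨sub_nonpos.mpr hz.1, hz.2⟩
  calc _ ≤ (2 * ENNReal.ofReal (Cν / r) + 2 * ENNReal.ofReal (Cν / r)) * ENNReal.ofReal g := by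
        gcongr
    _ = ENNReal.ofReal (g * (4 * (Cν / r))) := by
        rw [ENNReal.ofReal_mul hg.le, ENNReal.ofReal_mul (by norm_num), ← add_mul, mul_comm]
        norm_num
    _ = ENNReal.ofReal (4 * Cν * (g + 2 * M)) := by
        congr 1; simp only [r]; field_simp

end

theorem kappa_bound_for_C2_data_general (N : ℕ)
    (ν : Measure (EuclideanSpace ℝ (Fin N))) (Cν : ℝ) (hCν : 0 < Cν)
    (hν1 : ∀ δ ∈ Set.Ioc (0:ℝ) 1,
      ν (Metric.ball (0 : EuclideanSpace ℝ (Fin N)) δ)ᶜ ≤ ENNReal.ofReal (Cν / δ))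
    (hν2 : ∀ e : EuclideanSpace ℝ (Fin N), ‖e‖ = 1 → ∀ r ∈ Set.Ioc (0:ℝ) 1,
      ENNReal.ofReal r * ν {z ∈ Metric.ball (0 : EuclideanSpace ℝ (Fin N)) 1 |
          r * |⟪z, e⟫| ≤ ‖z - ⟪z, e⟫ • e‖ ^ 2} ≤ ENNReal.ofReal Cν)
    (u₀ : EuclideanSpace ℝ (Fin N) → ℝ)
    (M₁ M₂ : ℝ) (hDu : ∀ x, ‖gradient u₀ x‖ ≤ M₁)
    (hD2u : ∀ x z, |u₀ (x + z) - u₀ x - ⟪gradient u₀ x, z⟫| ≤ M₂ * ‖z‖ ^ 2) :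
    ∃ C₀ : ℝ, 0 < C₀ ∧ ∀ x : EuclideanSpace ℝ (Fin N), gradient u₀ x ≠ 0 →
      (ν {z | u₀ x ≤ u₀ (x + z) ∧ ⟪gradient u₀ x, z⟫ ≤ 0}
          + ν {z | u₀ (x + z) ≤ u₀ x ∧ 0 ≤ ⟪gradient u₀ x, z⟫})
        * ENNReal.ofReal ‖gradient u₀ x‖ ≤ ENNReal.ofReal C₀ := by
  have hM₁ : 0 ≤ M₁ := (norm_nonneg _).trans (hDu 0)
  refine ⟨4 * Cν * (M₁ + 2 * |M₂| + 1), by positivity, fun x hx => ?_⟩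
  have hTaylor : ∀ z, |u₀ (x + z) - u₀ x - ⟪gradient u₀ x, z⟫| ≤ |M₂| * ‖z‖ ^ 2 :=
    fun z => (hD2u x z).trans (by gcongr; exact le_abs_self M₂)
  calc _ ≤ ENNReal.ofReal (4 * Cν * (‖gradient u₀ x‖ + 2 * |M₂|)) :=
        measure_add_measure_opposite_sides_mul_norm_le hν1 hν2 hx (abs_nonneg M₂) hTaylor
    _ ≤ _ := ENNReal.ofReal_le_ofReal <|
        mul_le_mul_of_nonneg_left (by linarith [hDu x]) (by positivity)

/-- A priori bound: under the quantitative assumptions on the singular measure `ν`,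
for `u₀ ∈ C²_b(ℝ^N)` there is `C₀` such that at every point with `Du₀(x) ≠ 0`,
`(κ₊*[x,u₀] + κ₋*[x,u₀]) · |Du₀(x)| ≤ C₀`. -/
theorem kappa_bound_for_C2_data (N : ℕ) (hN : 1 ≤ N)
    (ν : Measure (EuclideanSpace ℝ (Fin N))) (Cν : ℝ) (hCν : 0 < Cν)
    (hν1 : ∀ δ ∈ Set.Ioc (0:ℝ) 1,
      ν (Metric.ball (0 : EuclideanSpace ℝ (Fin N)) δ)ᶜ ≤ ENNReal.ofReal (Cν / δ))
    (hν2 : ∀ e : EuclideanSpace ℝ (Fin N), ‖e‖ = 1 → ∀ r ∈ Set.Ioc (0:ℝ) 1,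
      ENNReal.ofReal r * ν {z ∈ Metric.ball (0 : EuclideanSpace ℝ (Fin N)) 1 |
          r * |⟪z, e⟫| ≤ ‖z - ⟪z, e⟫ • e‖ ^ 2} ≤ ENNReal.ofReal Cν)
    (u₀ : EuclideanSpace ℝ (Fin N) → ℝ) (hu₀ : ContDiff ℝ 2 u₀)
    (M₁ M₂ : ℝ) (hb : ∀ x, |u₀ x| ≤ M₁) (hDu : ∀ x, ‖gradient u₀ x‖ ≤ M₁)
    (hD2u : ∀ x z, |u₀ (x + z) - u₀ x - ⟪gradient u₀ x, z⟫| ≤ M₂ * ‖z‖ ^ 2) :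
    ∃ C₀ : ℝ, 0 < C₀ ∧ ∀ x : EuclideanSpace ℝ (Fin N), gradient u₀ x ≠ 0 →
      (ν {z | u₀ x ≤ u₀ (x + z) ∧ ⟪gradient u₀ x, z⟫ ≤ 0}
          + ν {z | u₀ (x + z) ≤ u₀ x ∧ 0 ≤ ⟪gradient u₀ x, z⟫})
        * ENNReal.ofReal ‖gradient u₀ x‖ ≤ ENNReal.ofReal C₀ :=
  kappa_bound_for_C2_data_general N ν Cν hCν hν1 hν2 u₀ M₁ M₂ hDu hD2u
end
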